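/- Let φ ∈ ℝ. Then there exists a constant c(φ) > 0 such that for all p ∈ (0, ∞), the intermediate energy satisfies I_p(E_φ) ≤ c(φ)^p · I_p(E_{π/2}). -/

import Mathlib

open MeasureTheory Real
open scoped ENNReal NNReal Classical

/-- The Menger curvature of three points in `ℝⁿ`: the reciprocal of the circumradius,
`κ(x,y,z) = 2 dist(z, L_{x,y}) / (|x-z| |y-z|)` for pairwise distinct non-collinear points,
and `0` otherwise. -/
noncomputable def menger {n : ℕ} (x y z : EuclideanSpace ℝ (Fin n)) : ℝ :=
  if x ≠ y ∧ y ≠ z ∧ x ≠ z ∧ ¬ Collinear ℝ ({x, y, z} : Set (EuclideanSpace ℝ (Fin n)))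
  then 2 * Metric.infDist z (affineSpan ℝ ({x, y} : Set (EuclideanSpace ℝ (Fin n))) :
      Set (EuclideanSpace ℝ (Fin n))) / (dist x z * dist y z)
  else 0

/-- The point `(a, b) ∈ ℝ²` (with the Euclidean metric). -/
noncomputable def pt (a b : ℝ) : EuclideanSpace ℝ (Fin 2) :=
  (WithLp.equiv 2 (Fin 2 → ℝ)).symm ![a, b]

/-- The one-corner set `E_φ = ([0,1) × {0}) ∪ [0,1)·(cos φ, sin φ)`. -/
noncomputable def Eset (φ : ℝ) : Set (EuclideanSpace ℝ (Fin 2)) :=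
  {x | ∃ t ∈ Set.Ico (0:ℝ) 1, x = pt t 0} ∪
    {x | ∃ t ∈ Set.Ico (0:ℝ) 1, x = t • pt (Real.cos φ) (Real.sin φ)}

/-- Integral Menger curvature `M_p(X)` (innermost integration in `x`). -/
noncomputable def Mp (p : ℝ) (X : Set (EuclideanSpace ℝ (Fin 2))) : ℝ≥0∞ :=
  ∫⁻ z in X, ∫⁻ y in X, ∫⁻ x in X,
    (ENNReal.ofReal (menger x y z)) ^ p ∂μH[1] ∂μH[1] ∂μH[1]

/-- Intermediate energy `I_p(X)`. -/
noncomputable def Ip (p : ℝ) (X : Set (EuclideanSpace ℝ (Fin 2))) : ℝ≥0∞ :=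
  ∫⁻ y in X, ∫⁻ x in X,
    (⨆ z ∈ X, ENNReal.ofReal (menger x y z)) ^ p ∂μH[1] ∂μH[1]

/-- Global curvature energy `U_p(X)`. -/
noncomputable def Up (p : ℝ) (X : Set (EuclideanSpace ℝ (Fin 2))) : ℝ≥0∞ :=
  ∫⁻ x in X, (⨆ y ∈ X, ⨆ z ∈ X, ENNReal.ofReal (menger x y z)) ^ p ∂μH[1]

/-!
The linear map `T_φ` with matrix `[[1, cos φ], [0, sin φ]]` fixes the horizontal leg and carries
the vertical leg of `E_{π/2}` isometrically onto the slanted leg of `E_φ`, so `H¹`-integrals over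
`E_φ` are bounded by the corresponding integrals over `E_{π/2}` composed with `T_φ`, while the
supremum over `z ∈ E_φ` becomes a supremum over `z ∈ E_{π/2}`. If `sin φ ≠ 0`, `T_φ` is an
invertible linear map of the plane, hence bi-Lipschitz: it stretches the distance from a point to a
line by at most `Lip T_φ` and shrinks distances by at most `Lip T_φ⁻¹`, so it increases Menger
curvature by at most the factor `Lip T_φ · (Lip T_φ⁻¹)²`. If `sin φ = 0`, `E_φ` lies on a line
and `I_p(E_φ) = 0`.
-/

open Set Metric

theorem Collinear.affineMap_image {k V₁ P₁ V₂ P₂ : Type*} [DivisionRing k] [AddCommGroup V₁]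
    [Module k V₁] [AddTorsor V₁ P₁] [AddCommGroup V₂] [Module k V₂] [AddTorsor V₂ P₂]
    {s : Set P₁} (h : Collinear k s) (f : P₁ →ᵃ[k] P₂) : Collinear k (f '' s) := by
  rw [Collinear, ← AffineMap.map_vectorSpan]
  exact Cardinal.lift_le_one_iff.mp
    ((lift_rank_map_le f.linear _).trans (Cardinal.lift_le_one_iff.mpr h))

theorem LipschitzWith.infDist_image_le {α β : Type*} [PseudoMetricSpace α] [PseudoMetricSpace β]
    {K : ℝ≥0} {f : α → β} (hf : LipschitzWith K f) (x : α) {s : Set α} (hs : s.Nonempty) :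
    infDist (f x) (f '' s) ≤ K * infDist x s := by
  have : Nonempty s := hs.to_subtype
  rw [infDist_eq_iInf (s := s), Real.mul_iInf_of_nonneg K.coe_nonneg]
  exact le_ciInf fun y => (infDist_le_dist_of_mem (mem_image_of_mem f y.2)).trans (hf.dist_le_mul x y)

theorem isometry_smul_of_norm_eq_one {E : Type*} [NormedAddCommGroup E] [NormedSpace ℝ E]
    {v : E} (hv : ‖v‖ = 1) : Isometry fun t : ℝ => t • v :=
  Isometry.of_dist_eq fun a b => by
    rw [dist_eq_norm, dist_eq_norm, ← sub_smul, norm_smul, hv, mul_one, Real.norm_eq_abs]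

theorem Isometry.setLIntegral_image_hausdorffMeasure {X Y : Type*} [EMetricSpace X]
    [MeasurableSpace X] [BorelSpace X] [CompleteSpace X] [EMetricSpace Y] [MeasurableSpace Y]
    [BorelSpace Y] {e : X → Y} (he : Isometry e) {d : ℝ} (hd : 0 ≤ d) (s : Set X)
    (g : Y → ℝ≥0∞) : ∫⁻ y in e '' s, g y ∂μH[d] = ∫⁻ x in s, g (e x) ∂μH[d] := by
  have hemb : MeasurableEmbedding e := he.isClosedEmbedding.measurableEmbedding
  rw [← Measure.restrict_restrict_of_subset (image_subset_range e s),
    ← he.map_hausdorffMeasure (Or.inl hd), hemb.restrict_map,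
    preimage_image_eq s hemb.injective, hemb.lintegral_map]

theorem menger_nonneg {n : ℕ} (x y z : EuclideanSpace ℝ (Fin n)) : 0 ≤ menger x y z := by
  unfold menger
  split_ifs
  · have := infDist_nonneg (x := z) (s := (affineSpan ℝ {x, y} : Set (EuclideanSpace ℝ (Fin n))))
    positivity
  · exact le_rfl

theorem menger_map_le {n m : ℕ} (f : EuclideanSpace ℝ (Fin n) →ᵃ[ℝ] EuclideanSpace ℝ (Fin m))
    {L K : ℝ≥0} (hL : LipschitzWith L f) (hK : AntilipschitzWith K f)
    (x y z : EuclideanSpace ℝ (Fin n)) :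
    menger (f x) (f y) (f z) ≤ L * K ^ 2 * menger x y z := by
  by_cases h : f x ≠ f y ∧ f y ≠ f z ∧ f x ≠ f z ∧
      ¬ Collinear ℝ ({f x, f y, f z} : Set (EuclideanSpace ℝ (Fin m)))
  swap
  · rw [menger, if_neg h]
    have := menger_nonneg x y z
    positivity
  obtain ⟨hxy, hyz, hxz, hcol⟩ := h
  have hcol' : ¬ Collinear ℝ ({x, y, z} : Set (EuclideanSpace ℝ (Fin n))) := fun hc =>
    hcol (by simpa [image_insert_eq] using hc.affineMap_image f)
  rw [menger, menger, if_pos ⟨hxy, hyz, hxz, hcol⟩,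
    if_pos ⟨ne_of_apply_ne f hxy, ne_of_apply_ne f hyz, ne_of_apply_ne f hxz, hcol'⟩]
  have hd : infDist (f z) (affineSpan ℝ {f x, f y}) ≤
      L * infDist z (affineSpan ℝ ({x, y} : Set (EuclideanSpace ℝ (Fin n)))) := by
    rw [← image_pair, ← AffineSubspace.map_span, AffineSubspace.coe_map]
    exact hL.infDist_image_le z ⟨x, subset_affineSpan ℝ _ (mem_insert x _)⟩
  have hxz' : dist x z ≤ K * dist (f x) (f z) := hK.le_mul_dist x z
  have hyz' : dist y z ≤ K * dist (f y) (f z) := hK.le_mul_dist y z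
  have hxz0 : 0 < dist x z := dist_pos.mpr (ne_of_apply_ne f hxz)
  have hyz0 : 0 < dist y z := dist_pos.mpr (ne_of_apply_ne f hyz)
  have hK0 : (0 : ℝ) < K := pos_of_mul_pos_left (hxz0.trans_le hxz') dist_nonneg
  have hfxz : 0 < dist (f x) (f z) := dist_pos.mpr hxz
  have hfyz : 0 < dist (f y) (f z) := dist_pos.mpr hyz
  have hd0 : 0 ≤ infDist z (affineSpan ℝ ({x, y} : Set (EuclideanSpace ℝ (Fin n)))) :=
    infDist_nonneg
  calc 2 * infDist (f z) (affineSpan ℝ {f x, f y}) / (dist (f x) (f z) * dist (f y) (f z))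
      ≤ 2 * (L * infDist z (affineSpan ℝ {x, y})) / (dist (f x) (f z) * dist (f y) (f z)) := by
        gcongr
    _ = L * K ^ 2 * (2 * infDist z (affineSpan ℝ {x, y})) /
          (K * dist (f x) (f z) * (K * dist (f y) (f z))) := by
        field_simp
    _ ≤ L * K ^ 2 * (2 * infDist z (affineSpan ℝ {x, y})) / (dist x z * dist y z) := by
        gcongr
    _ = L * K ^ 2 * (2 * infDist z (affineSpan ℝ {x, y}) / (dist x z * dist y z)) := by
        ring

theorem Ip_eq_zero_of_collinear {X : Set (EuclideanSpace ℝ (Fin 2))} (hXm : MeasurableSet X)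
    (hX : Collinear ℝ X) {p : ℝ} (hp : 0 < p) : Ip p X = 0 := by
  have hκ : ∀ x ∈ X, ∀ y ∈ X, ∀ z ∈ X, menger x y z = 0 := fun x hx y hy z hz =>
    if_neg fun h => h.2.2.2 (hX.subset (by simp [insert_subset_iff, *]))
  refine setLIntegral_eq_zero hXm fun y hy => setLIntegral_eq_zero hXm fun x hx => ?_
  simp +contextual [hκ x hx y hy, hp]

theorem Ip_le_of_menger_comp_le {X Y : Set (EuclideanSpace ℝ (Fin 2))}
    (f : EuclideanSpace ℝ (Fin 2) → EuclideanSpace ℝ (Fin 2)) (hYX : Y ⊆ f '' X)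
    (hf : ∀ g : EuclideanSpace ℝ (Fin 2) → ℝ≥0∞,
      ∫⁻ y in Y, g y ∂μH[1] ≤ ∫⁻ x in X, g (f x) ∂μH[1])
    {c : ℝ} (hc : 0 ≤ c) (hκ : ∀ x y z, menger (f x) (f y) (f z) ≤ c * menger x y z)
    {p : ℝ} (hp : 0 ≤ p) : Ip p Y ≤ ENNReal.ofReal (c ^ p) * Ip p X := by
  have hsup : ∀ x y, (⨆ z ∈ Y, ENNReal.ofReal (menger (f x) (f y) z)) ^ p ≤
      ENNReal.ofReal (c ^ p) * (⨆ z ∈ X, ENNReal.ofReal (menger x y z)) ^ p := by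
    intro x y
    rw [← ENNReal.ofReal_rpow_of_nonneg hc hp, ← ENNReal.mul_rpow_of_nonneg _ _ hp]
    gcongr
    refine iSup₂_le fun _ hz => ?_
    obtain ⟨z, hzX, rfl⟩ := hYX hz
    calc ENNReal.ofReal (menger (f x) (f y) (f z))
        ≤ ENNReal.ofReal c * ENNReal.ofReal (menger x y z) := by
          rw [← ENNReal.ofReal_mul hc]
          exact ENNReal.ofReal_le_ofReal (hκ x y z)
      _ ≤ ENNReal.ofReal c * ⨆ z ∈ X, ENNReal.ofReal (menger x y z) := by
          gcongr
          exact le_biSup (fun z => ENNReal.ofReal (menger x y z)) hzX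
  calc Ip p Y
      ≤ ∫⁻ y in X, ∫⁻ x in Y, (⨆ z ∈ Y, ENNReal.ofReal (menger x (f y) z)) ^ p ∂μH[1] ∂μH[1] :=
        hf _
    _ ≤ ∫⁻ y in X, ∫⁻ x in X,
          (⨆ z ∈ Y, ENNReal.ofReal (menger (f x) (f y) z)) ^ p ∂μH[1] ∂μH[1] :=
        lintegral_mono fun y => hf _
    _ ≤ ∫⁻ y in X, ∫⁻ x in X,
          ENNReal.ofReal (c ^ p) * (⨆ z ∈ X, ENNReal.ofReal (menger x y z)) ^ p ∂μH[1] ∂μH[1] :=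
        lintegral_mono fun y => lintegral_mono fun x => hsup x y
    _ = ENNReal.ofReal (c ^ p) * Ip p X := by
        simp_rw [lintegral_const_mul' _ _ ENNReal.ofReal_ne_top]
        rfl

@[simp] theorem pt_apply_zero (a b : ℝ) : pt a b 0 = a := rfl
@[simp] theorem pt_apply_one (a b : ℝ) : pt a b 1 = b := rfl

theorem smul_pt (t a b : ℝ) : t • pt a b = pt (t * a) (t * b) := by
  ext i; fin_cases i <;> simp [pt]

theorem norm_pt_cos_sin (φ : ℝ) : ‖pt (cos φ) (sin φ)‖ = 1 := by
  simp [pt, EuclideanSpace.norm_eq, Fin.sum_univ_two]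

noncomputable def ray (φ : ℝ) (t : ℝ) : EuclideanSpace ℝ (Fin 2) := t • pt (cos φ) (sin φ)

theorem isometry_ray (φ : ℝ) : Isometry (ray φ) :=
  isometry_smul_of_norm_eq_one (norm_pt_cos_sin φ)

theorem Eset_eq_union (φ : ℝ) : Eset φ = ray 0 '' Ico 0 1 ∪ ray φ '' Ico 0 1 := by
  ext x
  simp [Eset, ray, smul_pt, eq_comm]

theorem measurableSet_image_ray (φ : ℝ) {s : Set ℝ} (hs : MeasurableSet s) :
    MeasurableSet (ray φ '' s) :=
  (isometry_ray φ).isClosedEmbedding.measurableEmbedding.measurableSet_image.mpr hs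

theorem measurableSet_Eset (φ : ℝ) : MeasurableSet (Eset φ) := by
  rw [Eset_eq_union]
  exact (measurableSet_image_ray 0 measurableSet_Ico).union
    (measurableSet_image_ray φ measurableSet_Ico)

theorem collinear_Eset {φ : ℝ} (hφ : sin φ = 0) : Collinear ℝ (Eset φ) := by
  rw [collinear_iff_exists_forall_eq_smul_vadd]
  refine ⟨0, pt 1 0, ?_⟩
  rintro _ (⟨t, -, rfl⟩ | ⟨t, -, rfl⟩)
  · exact ⟨t, by simp [smul_pt]⟩
  · exact ⟨t * cos φ, by simp [smul_pt, hφ]⟩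

theorem setLIntegral_Eset_le (φ : ℝ) (g : EuclideanSpace ℝ (Fin 2) → ℝ≥0∞) :
    ∫⁻ x in Eset φ, g x ∂μH[1] ≤
      ∫⁻ t in Ico 0 1, g (ray 0 t) ∂μH[1] + ∫⁻ t in Ico 0 1, g (ray φ t) ∂μH[1] := by
  rw [Eset_eq_union, ← (isometry_ray 0).setLIntegral_image_hausdorffMeasure zero_le_one,
    ← (isometry_ray φ).setLIntegral_image_hausdorffMeasure zero_le_one]
  exact lintegral_union_le g _ _

theorem image_ray_inter_image_ray_subset {φ : ℝ} (hφ : sin φ ≠ 0) (s t : Set ℝ) :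
    ray 0 '' s ∩ ray φ '' t ⊆ {0} := by
  rintro _ ⟨⟨a, -, rfl⟩, ⟨b, -, hba⟩⟩
  have hb : b = 0 := by
    simpa [ray, smul_pt, hφ] using congrArg (· 1) hba
  rw [mem_singleton_iff, ← hba, hb, ray, zero_smul]

theorem setLIntegral_Eset_eq {φ : ℝ} (hφ : sin φ ≠ 0) (g : EuclideanSpace ℝ (Fin 2) → ℝ≥0∞) :
    ∫⁻ x in Eset φ, g x ∂μH[1] =
      ∫⁻ t in Ico 0 1, g (ray 0 t) ∂μH[1] + ∫⁻ t in Ico 0 1, g (ray φ t) ∂μH[1] := by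
  have : NullSingletonClass (μH[1] : Measure (EuclideanSpace ℝ (Fin 2))) :=
    Measure.nullSingletonClass_hausdorff _ one_pos
  have hdisj : AEDisjoint μH[1] (ray 0 '' Ico 0 1) (ray φ '' Ico 0 1) :=
    measure_mono_null (image_ray_inter_image_ray_subset hφ _ _) (measure_singleton 0)
  rw [Eset_eq_union, Measure.restrict_union₀ hdisj
    (measurableSet_image_ray φ measurableSet_Ico).nullMeasurableSet, lintegral_add_measure,
    (isometry_ray 0).setLIntegral_image_hausdorffMeasure zero_le_one,
    (isometry_ray φ).setLIntegral_image_hausdorffMeasure zero_le_one]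

noncomputable def shear (φ : ℝ) : EuclideanSpace ℝ (Fin 2) →ₗ[ℝ] EuclideanSpace ℝ (Fin 2) :=
  Matrix.toEuclideanLin !![1, cos φ; 0, sin φ]

theorem shear_apply (φ : ℝ) (v : EuclideanSpace ℝ (Fin 2)) :
    shear φ v = pt (v 0 + cos φ * v 1) (sin φ * v 1) := by
  ext i; fin_cases i <;> simp [shear, Matrix.mulVec, dotProduct, Fin.sum_univ_two]

theorem shear_ray_zero (φ t : ℝ) : shear φ (ray 0 t) = ray 0 t := by
  simp [shear_apply, ray, smul_pt]

theorem shear_ray_pi_div_two (φ t : ℝ) : shear φ (ray (π / 2) t) = ray φ t := by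
  simp [shear_apply, ray, smul_pt, mul_comm]

theorem shear_injective {φ : ℝ} (hφ : sin φ ≠ 0) : Function.Injective (shear φ) := by
  intro u v huv
  have h1 : u 1 = v 1 := by
    simpa [shear_apply, hφ] using congrArg (· 1) huv
  have h0 : u 0 = v 0 := by
    simpa [shear_apply, h1] using congrArg (· 0) huv
  ext i; fin_cases i <;> assumption

theorem shear_image_Eset_pi_div_two (φ : ℝ) : shear φ '' Eset (π / 2) = Eset φ := by
  simp only [Eset_eq_union, image_union, image_image, shear_ray_zero, shear_ray_pi_div_two]

theorem setLIntegral_Eset_le_setLIntegral_shear (φ : ℝ) (g : EuclideanSpace ℝ (Fin 2) → ℝ≥0∞) :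
    ∫⁻ x in Eset φ, g x ∂μH[1] ≤ ∫⁻ x in Eset (π / 2), g (shear φ x) ∂μH[1] := by
  rw [setLIntegral_Eset_eq (φ := π / 2) (by simp)]
  simpa only [shear_ray_zero, shear_ray_pi_div_two] using setLIntegral_Eset_le φ g

theorem exists_menger_shear_le {φ : ℝ} (hφ : sin φ ≠ 0) :
    ∃ c > 0, ∀ x y z, menger (shear φ x) (shear φ y) (shear φ z) ≤ c * menger x y z := by
  obtain ⟨K, hK0, hK⟩ := (shear φ).injective_iff_antilipschitz.mp (shear_injective hφ)
  set L := ‖LinearMap.toContinuousLinearMap (shear φ)‖₊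
  have hL : LipschitzWith (L + 1) (shear φ) :=
    (LinearMap.toContinuousLinearMap (shear φ)).lipschitz.weaken le_self_add
  exact ⟨(L + 1 : ℝ≥0) * K ^ 2, by positivity, menger_map_le (shear φ).toAffineMap hL hK⟩

/-- `I_p(E_φ) ≤ c(φ)^p · I_p(E_{π/2})`. -/
theorem Ip_Eset_le (φ : ℝ) :
    ∃ c : ℝ, 0 < c ∧ ∀ p : ℝ, 0 < p →
      Ip p (Eset φ) ≤ ENNReal.ofReal (c ^ p) * Ip p (Eset (π / 2)) := by
  by_cases hφ : sin φ = 0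
  · refine ⟨1, one_pos, fun p hp => ?_⟩
    rw [Ip_eq_zero_of_collinear (measurableSet_Eset φ) (collinear_Eset hφ) hp]
    exact zero_le
  obtain ⟨c, hc, hκ⟩ := exists_menger_shear_le hφ
  exact ⟨c, hc, fun p hp => Ip_le_of_menger_comp_le (shear φ)
    (shear_image_Eset_pi_div_two φ).ge (setLIntegral_Eset_le_setLIntegral_shear φ) hc.le hκ hp.le⟩
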